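/- arXiv:2506.12660 — 2 statements merged into one kernel-verified Lean document; each statement's English description precedes it below -/
import Mathlib

section
/- Let G be a graph with a clique cutset C, and let V1, V2 be a partition of V(G) − C into two nonempty sets with no edges between V1 and V2. If the induced subgraph G[C ∪ V1] is perfect, then G is not minimally non-perfectly divisible. -/
/-! Assume `G` is MNPD; it suffices to find a good partition of `G` itself, since proper induced
subgraphs are perfectly divisible by minimality. If `G[C ∪ V2]` has no edge, then
`ω(G[V2]) ≤ 1 < ω(G)` and `(C ∪ V1, V2)` is good. Otherwise `G[C ∪ V2]` is a proper induced
subgraph with an edge, so it has a good partition `(A, B)`, and `(A ∪ V1, B)` is good for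
`G`: `G[A ∪ V1]` is perfect because it is glued from the perfect graphs `G[A]` and `G[(A ∩ C) ∪ V1]`
along the clique `A ∩ C`, and gluing along a clique preserves perfection. -/

open SimpleGraph

/-- A graph is perfect if every induced subgraph has chromatic number equal to
its clique number. -/
def IsPerfect {W : Type*} (G : SimpleGraph W) : Prop :=
  ∀ s : Set W, (G.induce s).chromaticNumber = ((G.induce s).cliqueNum : ℕ∞)

/-- `(A, B)` is a good partition of the induced subgraph `G[s]`:
`A` and `B` partition `s`, `G[A]` is perfect and `ω(G[B]) < ω(G[s])`. -/
def GoodPartition {W : Type*} (G : SimpleGraph W) (s A B : Set W) : Prop :=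
  A ∪ B = s ∧ Disjoint A B ∧ IsPerfect (G.induce A) ∧
    (G.induce B).cliqueNum < (G.induce s).cliqueNum

/-- A graph is perfectly divisible if every induced subgraph with at least one
edge admits a good partition. -/
def PerfectlyDivisible {W : Type*} (G : SimpleGraph W) : Prop :=
  ∀ s : Set W, (G.induce s).edgeSet.Nonempty → ∃ A B : Set W, GoodPartition G s A B

/-- A graph is minimally non-perfectly divisible if it is not perfectly
divisible but every proper induced subgraph is. -/
def MNPD {W : Type*} (G : SimpleGraph W) : Prop :=
  ¬ PerfectlyDivisible G ∧ ∀ s : Set W, s ≠ Set.univ → PerfectlyDivisible (G.induce s)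

/-- `C` is a clique cutset of `G`: `C` is a clique and `G - C` is disconnected,
i.e. the remaining vertices split into two nonempty parts with no edges between them. -/
def IsCliqueCutset {W : Type*} (G : SimpleGraph W) (C : Set W) : Prop :=
  G.IsClique C ∧ ∃ V1 V2 : Set W, V1.Nonempty ∧ V2.Nonempty ∧ Disjoint V1 V2 ∧
    V1 ∪ V2 = Cᶜ ∧ ∀ x ∈ V1, ∀ y ∈ V2, ¬ G.Adj x y

open Set

namespace SimpleGraph

variable {α β : Type*} {G : SimpleGraph α} {H : SimpleGraph β}

noncomputable def Embedding.induceIso (f : G ↪g H) (s : Set α) :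
    G.induce s ≃g H.induce (f '' s) where
  toEquiv := Equiv.Set.image f s f.injective
  map_rel_iff' := f.map_adj_iff

theorem IsContained.cliqueNum_le [Finite β] (h : G ⊑ H) : G.cliqueNum ≤ H.cliqueNum := by
  obtain ⟨f⟩ := h
  obtain ⟨s, hs⟩ := G.exists_isNClique_cliqueNum
  have hs' : H.IsNClique G.cliqueNum (s.map ⟨f, f.injective⟩) := by
    refine ⟨?_, (Finset.card_map _).trans hs.card_eq⟩
    rw [Finset.coe_map]
    rintro _ ⟨a, ha, rfl⟩ _ ⟨b, hb, rfl⟩ hab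
    exact f.toHom.map_adj (hs.isClique ha hb (ne_of_apply_ne _ hab))
  exact hs'.card_eq ▸ IsClique.card_le_cliqueNum (tc := hs'.isClique)

theorem Iso.cliqueNum_eq [Finite α] [Finite β] (e : G ≃g H) : G.cliqueNum = H.cliqueNum :=
  le_antisymm (IsContained.cliqueNum_le ⟨e.toCopy⟩) (IsContained.cliqueNum_le ⟨e.symm.toCopy⟩)

theorem cliqueNum_induce_mono [Finite α] {s t : Set α} (h : s ⊆ t) :
    (G.induce s).cliqueNum ≤ (G.induce t).cliqueNum :=
  IsContained.cliqueNum_le ⟨(G.induceHomOfLE h).toCopy⟩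

theorem one_lt_cliqueNum_iff [Finite α] : 1 < G.cliqueNum ↔ G.edgeSet.Nonempty := by
  classical
  constructor
  · intro h
    obtain ⟨s, hs⟩ := G.exists_isNClique_cliqueNum
    obtain ⟨a, ha, b, hb, hab⟩ := Finset.one_lt_card.1 (hs.card_eq ▸ h)
    exact ⟨s(a, b), hs.isClique ha hb hab⟩
  · rintro ⟨e, he⟩
    induction e using Sym2.ind with | _ a b =>
    have hpair : G.IsClique ({a, b} : Finset α) := by
      rw [Finset.coe_pair, isClique_pair]
      exact fun _ => he
    calc 1 < ({a, b} : Finset α).card := by rw [Finset.card_pair he.ne]; norm_num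
      _ ≤ G.cliqueNum := IsClique.card_le_cliqueNum (tc := hpair)

theorem Colorable.induce_union_of_isClique_inter {n : ℕ} {X Y : Set α}
    (hX : (G.induce X).Colorable n) (hY : (G.induce Y).Colorable n)
    (hXY : G.IsClique (X ∩ Y)) (hsep : ∀ x ∈ X \ Y, ∀ y ∈ Y \ X, ¬ G.Adj x y) :
    (G.induce (X ∪ Y)).Colorable n := by
  classical
  obtain ⟨cX⟩ := hX
  obtain ⟨cY⟩ := hY
  have injective_on_clique {Z : Set α} (c : (G.induce Z).Coloring (Fin n)) (hZ : X ∩ Y ⊆ Z) :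
      Function.Injective fun v : ↥(X ∩ Y) => c ⟨v, hZ v.2⟩ := by
    intro u v huv
    by_contra hne
    exact c.valid (show (G.induce Z).Adj ⟨u, hZ u.2⟩ ⟨v, hZ v.2⟩ from
      hXY u.2 v.2 (Subtype.coe_ne_coe.2 hne)) huv
  -- Both colourings are injective on the clique `X ∩ Y`, so a permutation of the colours makes
  -- them agree there.
  have hX_inj := injective_on_clique cX inter_subset_left
  have : Finite ↥(X ∩ Y) := .of_injective _ hX_inj
  obtain ⟨σ, hσ⟩ :=
    Equiv.Perm.exists_extending_pair _ _ hX_inj (injective_on_clique cY inter_subset_right)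
  let c : ↥(X ∪ Y) → Fin n := fun v =>
    if hv : (v : α) ∈ X then σ (cX ⟨v, hv⟩) else cY ⟨v, v.2.resolve_left hv⟩
  have c_of_mem_Y (v : ↥(X ∪ Y)) (hv : (v : α) ∈ Y) : c v = cY ⟨v, hv⟩ := by
    by_cases hvX : (v : α) ∈ X
    · simpa [c, hvX] using hσ ⟨v, hvX, hv⟩
    · simp [c, hvX]
  refine ⟨Coloring.mk c fun {u v} (huv : G.Adj u v) => ?_⟩
  by_cases hXuv : (u : α) ∈ X ∧ (v : α) ∈ X
  · simpa [c, hXuv.1, hXuv.2] using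
      cX.valid (show (G.induce X).Adj ⟨u, hXuv.1⟩ ⟨v, hXuv.2⟩ from huv)
  have mem_Y {a b : ↥(X ∪ Y)} (hab : G.Adj a b) (hb : (b : α) ∉ X) : (a : α) ∈ Y := by
    by_contra ha
    exact hsep a ⟨a.2.resolve_right ha, ha⟩ b ⟨b.2.resolve_left hb, hb⟩ hab
  have hY : (u : α) ∈ Y ∧ (v : α) ∈ Y := by
    by_cases hu : (u : α) ∈ X
    · have hv : (v : α) ∉ X := fun hv => hXuv ⟨hu, hv⟩
      exact ⟨mem_Y huv hv, v.2.resolve_left hv⟩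
    · exact ⟨u.2.resolve_left hu, mem_Y huv.symm hu⟩
  rw [c_of_mem_Y u hY.1, c_of_mem_Y v hY.2]
  exact cY.valid (show (G.induce Y).Adj ⟨u, hY.1⟩ ⟨v, hY.2⟩ from huv)

end SimpleGraph

theorem IsPerfect.of_iso {V W : Type*} [Finite W] {G : SimpleGraph V} {H : SimpleGraph W}
    (e : G ≃g H) (h : IsPerfect G) : IsPerfect H := by
  intro t
  have i := e.symm.toEmbedding.induceIso t
  rw [chromaticNumber_congr i, i.cliqueNum_eq]
  exact h _

section Perfect

variable {V : Type*} [Finite V] {G : SimpleGraph V}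

theorem isPerfect_induce_iff {u : Set V} :
    IsPerfect (G.induce u) ↔
      ∀ t ⊆ u, (G.induce t).chromaticNumber = ((G.induce t).cliqueNum : ℕ∞) := by
  have key (s : Set u) : (G.induce u).induce s ≃g G.induce (Subtype.val '' s) :=
    (Embedding.induce u).induceIso s
  constructor
  · intro h t ht
    have hs := h (Subtype.val ⁻¹' t)
    rw [chromaticNumber_congr (key _), (key _).cliqueNum_eq] at hs
    rwa [Subtype.image_preimage_coe, inter_eq_right.2 ht] at hs
  · intro h s
    rw [chromaticNumber_congr (key s), (key s).cliqueNum_eq]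
    exact h _ (by simp)

theorem IsPerfect.induce_of_subset {t u : Set V} (h : IsPerfect (G.induce u)) (htu : t ⊆ u) :
    IsPerfect (G.induce t) :=
  isPerfect_induce_iff.2 fun s hst => isPerfect_induce_iff.1 h s (hst.trans htu)

theorem IsPerfect.induce_union_of_isClique_inter {X Y : Set V}
    (hX : IsPerfect (G.induce X)) (hY : IsPerfect (G.induce Y))
    (hXY : G.IsClique (X ∩ Y)) (hsep : ∀ x ∈ X \ Y, ∀ y ∈ Y \ X, ¬ G.Adj x y) :
    IsPerfect (G.induce (X ∪ Y)) := by
  rw [isPerfect_induce_iff] at hX hY ⊢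
  intro t ht
  refine le_antisymm ?_ cliqueNum_le_chromaticNumber
  have colorable_inter {Z : Set V}
      (hZ : ∀ s ⊆ Z, (G.induce s).chromaticNumber = ((G.induce s).cliqueNum : ℕ∞)) :
      (G.induce (t ∩ Z)).Colorable (G.induce t).cliqueNum := by
    rw [← chromaticNumber_le_iff_colorable, hZ _ inter_subset_right]
    exact_mod_cast cliqueNum_induce_mono inter_subset_left
  have hcol := (colorable_inter hX).induce_union_of_isClique_inter (colorable_inter hY)
    (hXY.subset (inter_subset_inter inter_subset_right inter_subset_right))
    fun x hx y hy => hsep x ⟨hx.1.2, fun hxY => hx.2 ⟨hx.1.1, hxY⟩⟩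
      y ⟨hy.1.2, fun hyX => hy.2 ⟨hy.1.1, hyX⟩⟩
  rw [← inter_union_distrib_left, inter_eq_left.2 ht] at hcol
  exact hcol.chromaticNumber_le

end Perfect

theorem PerfectlyDivisible.exists_goodPartition_of_induce {V : Type*} [Finite V]
    {G : SimpleGraph V} {s : Set V} (hs : PerfectlyDivisible (G.induce s))
    (hedge : (G.induce s).edgeSet.Nonempty) : ∃ A B, GoodPartition G s A B := by
  have key (A : Set s) : (G.induce s).induce A ≃g G.induce (Subtype.val '' A) :=
    (Embedding.induce s).induceIso A
  rw [← one_lt_cliqueNum_iff, ← (induceUnivIso _).cliqueNum_eq, one_lt_cliqueNum_iff] at hedge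
  obtain ⟨A, B, hunion, hdisj, hperf, hlt⟩ := hs univ hedge
  refine ⟨Subtype.val '' A, Subtype.val '' B, ?_, ?_, hperf.of_iso (key A), ?_⟩
  · simp [← image_union, hunion]
  · exact (disjoint_image_iff Subtype.val_injective).2 hdisj
  · rwa [(key B).cliqueNum_eq, (induceUnivIso _).cliqueNum_eq] at hlt

section CliqueCutset

variable {V : Type*} {G : SimpleGraph V} {C V1 V2 : Set V}

theorem goodPartition_univ_of_cliqueNum_lt (hdisj : Disjoint V1 V2) (hcover : V1 ∪ V2 = Cᶜ)
    (hperf : IsPerfect (G.induce (C ∪ V1)))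
    (hlt : (G.induce V2).cliqueNum < (G.induce univ).cliqueNum) :
    GoodPartition G univ (C ∪ V1) V2 := by
  refine ⟨by rw [union_assoc, hcover, union_compl_self], ?_, hperf, hlt⟩
  have hV2 : V2 ⊆ Cᶜ := hcover ▸ subset_union_right
  exact disjoint_union_left.2 ⟨subset_compl_iff_disjoint_left.1 hV2, hdisj⟩

theorem GoodPartition.extend_across_cliqueCutset [Finite V] {A B : Set V}
    (h : GoodPartition G (C ∪ V2) A B) (hC : G.IsClique C) (hdisj : Disjoint V1 V2)
    (hcover : V1 ∪ V2 = Cᶜ) (hsep : ∀ x ∈ V1, ∀ y ∈ V2, ¬ G.Adj x y)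
    (hperf : IsPerfect (G.induce (C ∪ V1))) :
    GoodPartition G univ (A ∪ V1) B := by
  obtain ⟨hunion, hAB, hA, hlt⟩ := h
  have hV1 : Disjoint V1 (C ∪ V2) :=
    disjoint_union_right.2 ⟨subset_compl_iff_disjoint_right.1 (hcover ▸ subset_union_left), hdisj⟩
  have hA_sub : A ⊆ C ∪ V2 := hunion ▸ subset_union_left
  have hglue : A ∪ ((A ∩ C) ∪ V1) = A ∪ V1 := by
    rw [← union_assoc, union_eq_left.2 inter_subset_left]
  refine ⟨?_, ?_, ?_, hlt.trans_le (cliqueNum_induce_mono (subset_univ _))⟩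
  · rw [union_right_comm, hunion, union_assoc, union_comm V2, hcover, union_compl_self]
  · exact disjoint_union_left.2 ⟨hAB, hV1.mono_right (hunion ▸ subset_union_right)⟩
  · rw [← hglue]
    refine hA.induce_union_of_isClique_inter (hperf.induce_of_subset ?_) (hC.subset ?_) ?_
    · exact union_subset_union_left _ inter_subset_right
    · rintro v ⟨hvA, hvC | hv1⟩
      · exact hvC.2
      · exact (disjoint_left.1 hV1 hv1 (hA_sub hvA)).elim
    · rintro x ⟨hxA, hx⟩ y ⟨hy, hyA⟩ hxy
      have hy1 : y ∈ V1 := hy.resolve_left fun hyC => hyA hyC.1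
      have hx2 : x ∈ V2 := (hA_sub hxA).resolve_left fun hxC => hx (Or.inl ⟨hxA, hxC⟩)
      exact hsep y hy1 x hx2 hxy.symm

end CliqueCutset

theorem not_MNPD_of_one_side_perfect_general {V : Type*} [Fintype V] (G : SimpleGraph V)
    (C V1 V2 : Set V) (hC : G.IsClique C)
    (h1 : V1.Nonempty) (hdisj : Disjoint V1 V2)
    (hcover : V1 ∪ V2 = Cᶜ) (hsep : ∀ x ∈ V1, ∀ y ∈ V2, ¬ G.Adj x y)
    (hperf : IsPerfect (G.induce (C ∪ V1))) :
    ¬ MNPD G := by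
  rintro ⟨hnot, hmin⟩
  refine hnot fun s hs => ?_
  obtain hs_ne | rfl := ne_or_eq s univ
  · exact (hmin s hs_ne).exists_goodPartition_of_induce hs
  by_cases hedge : (G.induce (C ∪ V2)).edgeSet.Nonempty
  · have hproper : C ∪ V2 ≠ univ := by
      obtain ⟨v, hv⟩ := h1
      have hvC : v ∉ C := (hcover ▸ subset_union_left : V1 ⊆ Cᶜ) hv
      exact fun h => (h ▸ mem_univ v).elim hvC (disjoint_left.1 hdisj hv)
    obtain ⟨A, B, hAB⟩ := (hmin _ hproper).exists_goodPartition_of_induce hedge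
    exact ⟨A ∪ V1, B, hAB.extend_across_cliqueCutset hC hdisj hcover hsep hperf⟩
  · refine ⟨C ∪ V1, V2, goodPartition_univ_of_cliqueNum_lt hdisj hcover hperf ?_⟩
    calc (G.induce V2).cliqueNum ≤ (G.induce (C ∪ V2)).cliqueNum :=
          cliqueNum_induce_mono subset_union_right
      _ ≤ 1 := not_lt.1 (mt one_lt_cliqueNum_iff.1 hedge)
      _ < (G.induce univ).cliqueNum := one_lt_cliqueNum_iff.2 hs

/-- If `G` has a clique cutset `C` with sides `V1, V2` and `G[C ∪ V1]` is perfect,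
then `G` is not minimally non-perfectly divisible. -/
theorem not_MNPD_of_one_side_perfect {V : Type*} [Fintype V] (G : SimpleGraph V)
    (C V1 V2 : Set V) (hC : G.IsClique C)
    (h1 : V1.Nonempty) (h2 : V2.Nonempty) (hdisj : Disjoint V1 V2)
    (hcover : V1 ∪ V2 = Cᶜ) (hsep : ∀ x ∈ V1, ∀ y ∈ V2, ¬ G.Adj x y)
    (hperf : IsPerfect (G.induce (C ∪ V1))) :
    ¬ MNPD G :=
  not_MNPD_of_one_side_perfect_general G C V1 V2 hC h1 hdisj hcover hsep hperf
end

section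
/- Let G be a graph with a clique cutset C, and let V1, V2 be a partition of V(G) − C into nonempty sets with no edges between V1 and V2. If both induced subgraphs G[C ∪ V1] and G[C ∪ V2] are perfect, then G is perfect. -/
open SimpleGraph

/-! Let `s` be any vertex set and `k = ω(G[s])`. The two sides `s ∩ (C ∪ V₁)` and
`s ∩ (C ∪ V₂)` are induced subgraphs of perfect graphs, hence `k`-colourable. They meet in a
subset of the clique `C`, on which both colourings are injective, so after permuting the colours
of one of them they agree there; since no edge joins the two sides outside `C`, they glue to a
`k`-colouring of `G[s]`. -/

namespace SimpleGraph

variable {V W α : Type*} {G : SimpleGraph V}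

theorem cliqueNum_le_of_embedding [Finite W] {H : SimpleGraph W} (f : G ↪g H) :
    G.cliqueNum ≤ H.cliqueNum := by
  obtain ⟨t, ht⟩ := G.exists_isNClique_cliqueNum
  have hclique : H.IsClique (t.map f.toEmbedding : Set W) := by
    rw [Finset.coe_map]
    rintro _ ⟨x, hx, rfl⟩ _ ⟨y, hy, rfl⟩ hne
    exact f.map_adj_iff.mpr (ht.isClique hx hy fun h ↦ hne (h ▸ rfl))
  calc G.cliqueNum = (t.map f.toEmbedding).card := by rw [Finset.card_map, ht.card_eq]
    _ ≤ H.cliqueNum := hclique.card_le_cliqueNum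

theorem cliqueNum_congr [Finite V] [Finite W] {H : SimpleGraph W} (e : G ≃g H) :
    G.cliqueNum = H.cliqueNum :=
  le_antisymm (cliqueNum_le_of_embedding e.toEmbedding)
    (cliqueNum_le_of_embedding e.symm.toEmbedding)

theorem chromaticNumber_eq_cliqueNum_of_colorable (h : G.Colorable G.cliqueNum) :
    G.chromaticNumber = G.cliqueNum :=
  le_antisymm h.chromaticNumber_le G.cliqueNum_le_chromaticNumber

def induceInduceIso (G : SimpleGraph V) {A B : Set V} (hBA : B ⊆ A) :
    (G.induce A).induce (Subtype.val ⁻¹' B) ≃g G.induce B where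
  toEquiv := Equiv.subtypeSubtypeEquivSubtype fun hx ↦ hBA hx
  map_rel_iff' := Iff.rfl

section Gluing

variable {B₁ B₂ : Set V}

theorem induce_union_adj_mem_or_mem (hsep : ∀ x ∈ B₁ \ B₂, ∀ y ∈ B₂ \ B₁, ¬G.Adj x y)
    {v w : ↥(B₁ ∪ B₂)} (hvw : (G.induce (B₁ ∪ B₂)).Adj v w) :
    ((v : V) ∈ B₁ ∧ (w : V) ∈ B₁) ∨ ((v : V) ∈ B₂ ∧ (w : V) ∈ B₂) := by
  have hv : (v : V) ∈ B₁ ∨ (v : V) ∈ B₂ := v.2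
  have hw : (w : V) ∈ B₁ ∨ (w : V) ∈ B₂ := w.2
  have hvw' : G.Adj v w := hvw
  have hwv : G.Adj w v := hvw.symm
  have hsepv := hsep v
  have hsepw := hsep w
  simp only [Set.mem_sdiff] at hsepv hsepw
  tauto

noncomputable def Coloring.induceUnion (c₁ : (G.induce B₁).Coloring α)
    (c₂ : (G.induce B₂).Coloring α)
    (hagree : ∀ v (h₁ : v ∈ B₁) (h₂ : v ∈ B₂), c₁ ⟨v, h₁⟩ = c₂ ⟨v, h₂⟩)
    (hsep : ∀ x ∈ B₁ \ B₂, ∀ y ∈ B₂ \ B₁, ¬G.Adj x y) : (G.induce (B₁ ∪ B₂)).Coloring α := by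
  classical
  let c : ↥(B₁ ∪ B₂) → α := fun v ↦
    if h : (v : V) ∈ B₁ then c₁ ⟨v, h⟩ else c₂ ⟨v, v.2.resolve_left h⟩
  have hc₁ : ∀ (v : ↥(B₁ ∪ B₂)) (h : (v : V) ∈ B₁), c v = c₁ ⟨v, h⟩ := fun v h ↦ dif_pos h
  have hc₂ : ∀ (v : ↥(B₁ ∪ B₂)) (h : (v : V) ∈ B₂), c v = c₂ ⟨v, h⟩ := fun v h ↦ by
    by_cases h₁ : (v : V) ∈ B₁
    · exact (dif_pos h₁).trans (hagree v h₁ h)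
    · exact dif_neg h₁
  refine Coloring.mk c fun {v w} hvw ↦ ?_
  rcases induce_union_adj_mem_or_mem hsep hvw with ⟨hv, hw⟩ | ⟨hv, hw⟩
  · rw [hc₁ v hv, hc₁ w hw]
    exact c₁.valid (v := ⟨v, hv⟩) (w := ⟨w, hw⟩) hvw
  · rw [hc₂ v hv, hc₂ w hw]
    exact c₂.valid (v := ⟨v, hv⟩) (w := ⟨w, hw⟩) hvw

theorem Coloring.exists_perm_agree_on_isClique [Finite α] (hK : G.IsClique (B₁ ∩ B₂))
    (c₁ : (G.induce B₁).Coloring α) (c₂ : (G.induce B₂).Coloring α) :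
    ∃ σ : Equiv.Perm α, ∀ v (h₁ : v ∈ B₁) (h₂ : v ∈ B₂), σ (c₂ ⟨v, h₂⟩) = c₁ ⟨v, h₁⟩ := by
  let g₁ : ↥(B₁ ∩ B₂) → α := fun v ↦ c₁ ⟨v, v.2.1⟩
  let g₂ : ↥(B₁ ∩ B₂) → α := fun v ↦ c₂ ⟨v, v.2.2⟩
  have hinj : ∀ {B : Set V} (c : (G.induce B).Coloring α) (hB : B₁ ∩ B₂ ⊆ B),
      Function.Injective fun v : ↥(B₁ ∩ B₂) ↦ c ⟨v, hB v.2⟩ := by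
    intro B c hB x y hxy
    by_contra hne
    exact c.valid (v := ⟨x, hB x.2⟩) (w := ⟨y, hB y.2⟩)
      (hK x.2 y.2 (Subtype.coe_ne_coe.mpr hne)) hxy
  have : Finite ↥(B₁ ∩ B₂) := Finite.of_injective g₁ (hinj c₁ Set.inter_subset_left)
  obtain ⟨σ, hσ⟩ := Equiv.Perm.exists_extending_pair g₂ g₁
    (hinj c₂ Set.inter_subset_right) (hinj c₁ Set.inter_subset_left)
  exact ⟨σ, fun v h₁ h₂ ↦ hσ ⟨v, h₁, h₂⟩⟩

theorem colorable_induce_union_of_isClique_inter {n : ℕ} (hK : G.IsClique (B₁ ∩ B₂))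
    (hsep : ∀ x ∈ B₁ \ B₂, ∀ y ∈ B₂ \ B₁, ¬G.Adj x y)
    (h₁ : (G.induce B₁).Colorable n) (h₂ : (G.induce B₂).Colorable n) :
    (G.induce (B₁ ∪ B₂)).Colorable n := by
  obtain ⟨c₁⟩ := h₁
  obtain ⟨c₂⟩ := h₂
  obtain ⟨σ, hσ⟩ := Coloring.exists_perm_agree_on_isClique hK c₁ c₂
  exact ⟨c₁.induceUnion (coloringCongr Iso.refl σ c₂) (fun v h₁ h₂ ↦ (hσ v h₁ h₂).symm) hsep⟩

end Gluing

end SimpleGraph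

section

variable {V : Type*} {G : SimpleGraph V}

theorem IsPerfect.chromaticNumber_induce_of_subset [Finite V] {A B : Set V}
    (hA : IsPerfect (G.induce A)) (hBA : B ⊆ A) :
    (G.induce B).chromaticNumber = (G.induce B).cliqueNum := by
  have e := G.induceInduceIso hBA
  rw [← chromaticNumber_congr e, ← cliqueNum_congr e]
  exact hA _

theorem IsPerfect.colorable_induce_of_subset [Finite V] {A B s : Set V}
    (hA : IsPerfect (G.induce A)) (hBA : B ⊆ A) (hBs : B ⊆ s) :
    (G.induce B).Colorable (G.induce s).cliqueNum := by
  refine chromaticNumber_le_iff_colorable.mp ?_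
  rw [hA.chromaticNumber_induce_of_subset hBA, Nat.cast_le]
  exact cliqueNum_le_of_embedding (G.induceHomOfLE hBs)

end

theorem perfect_of_clique_cutset_sides_perfect_general {V : Type*} [Fintype V] (G : SimpleGraph V)
    (C V1 V2 : Set V) (hC : G.IsClique C)
    (hdisj : Disjoint V1 V2)
    (hcover : V1 ∪ V2 = Cᶜ) (hsep : ∀ x ∈ V1, ∀ y ∈ V2, ¬ G.Adj x y)
    (hperf1 : IsPerfect (G.induce (C ∪ V1))) (hperf2 : IsPerfect (G.induce (C ∪ V2))) :
    IsPerfect G := by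
  intro s
  set B1 := s ∩ (C ∪ V1)
  set B2 := s ∩ (C ∪ V2)
  have hunion : B1 ∪ B2 = s := by
    ext x
    have hx : x ∈ C ∨ x ∈ V1 ∨ x ∈ V2 := by
      by_cases hxC : x ∈ C
      · exact .inl hxC
      · exact .inr (hcover ▸ hxC : x ∈ V1 ∪ V2)
    simp only [B1, B2, Set.mem_union, Set.mem_inter_iff]
    tauto
  have hinter : B1 ∩ B2 ⊆ C := by
    rintro x ⟨⟨-, hx1⟩, -, hx2⟩
    by_contra hxC
    exact Set.disjoint_left.mp hdisj (hx1.resolve_left hxC) (hx2.resolve_left hxC)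
  have hsep' : ∀ x ∈ B1 \ B2, ∀ y ∈ B2 \ B1, ¬G.Adj x y := by
    rintro x ⟨⟨hxs, hx1⟩, hx2⟩ y ⟨⟨hys, hy2⟩, hy1⟩
    exact hsep x (hx1.resolve_left fun h ↦ hx2 ⟨hxs, .inl h⟩)
      y (hy2.resolve_left fun h ↦ hy1 ⟨hys, .inl h⟩)
  have hcol : (G.induce (B1 ∪ B2)).Colorable (G.induce s).cliqueNum :=
    colorable_induce_union_of_isClique_inter (hC.subset hinter) hsep'
      (hperf1.colorable_induce_of_subset Set.inter_subset_right Set.inter_subset_left)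
      (hperf2.colorable_induce_of_subset Set.inter_subset_right Set.inter_subset_left)
  rw [hunion] at hcol
  exact chromaticNumber_eq_cliqueNum_of_colorable hcol

/-- If `G` has a clique cutset `C` with sides `V1, V2` and both `G[C ∪ V1]` and
`G[C ∪ V2]` are perfect, then `G` is perfect. -/
theorem perfect_of_clique_cutset_sides_perfect {V : Type*} [Fintype V] (G : SimpleGraph V)
    (C V1 V2 : Set V) (hC : G.IsClique C)
    (h1 : V1.Nonempty) (h2 : V2.Nonempty) (hdisj : Disjoint V1 V2)
    (hcover : V1 ∪ V2 = Cᶜ) (hsep : ∀ x ∈ V1, ∀ y ∈ V2, ¬ G.Adj x y)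
    (hperf1 : IsPerfect (G.induce (C ∪ V1))) (hperf2 : IsPerfect (G.induce (C ∪ V2))) :
    IsPerfect G :=
  perfect_of_clique_cutset_sides_perfect_general G C V1 V2 hC hdisj hcover hsep hperf1 hperf2
end
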